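/- Let (A,X) and (B,Y) be featured graphs on n vertices with features in ℝ^d. Then there exists a doubly stochastic matrix S with ‖A·S − S·B‖ + Σ_{i,j} S_{i,j}·‖X_i − Y_j‖ = 0 (equivalently, d((A,X),(B,Y)) = 0, since the infimum is attained) if and only if (A,X) and (B,Y) are 1-WL equivalent. -/

import Mathlib

/-!
If `S` is doubly stochastic, `A S = S B` and `S` only couples vertices with equal features,
then by induction on the round `S` only couples vertices of equal color. Indeed, for a color
class `w`, `S` maps the indicator `ψ` of its right part to the indicator `χ` of its left part
and back, so the neighbor counts `a = A χ` and `b = B ψ` satisfy `S b = a` and `a S = b`, which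
forces `a i = b j` wherever `S i j ≠ 0`. Counting a class through `S` then shows that it has as
many vertices on each side.

Conversely, if the stable coloring is balanced, let `S` spread each vertex of `G` uniformly over
the vertices of `H` of its color. Stability makes the number of neighbors a vertex has in a class
depend only on the vertex's own class, and double counting the edges of `G` between two classes
gives `A S = S B`.
-/

/-- A featured graph on `n` vertices: an adjacency matrix of a simple graph
(symmetric, 0/1 entries, zero diagonal) together with node features in `ℝ^d`. -/
structure FeaturedGraph (n d : ℕ) where
  A : Matrix (Fin n) (Fin n) ℝ
  X : Fin n → EuclideanSpace ℝ (Fin d)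
  isSymm : A.IsSymm
  zeroOne : ∀ i j, A i j = 0 ∨ A i j = 1
  loopless : ∀ i, A i i = 0

open Classical in
/-- The neighbor set of `u` in the simple graph with adjacency matrix `A`. -/
noncomputable def nbrs {n : ℕ} (A : Matrix (Fin n) (Fin n) ℝ) (u : Fin n) : Finset (Fin n) :=
  Finset.univ.filter fun z => A u z = 1

open Classical in
/-- The color refinement (1-WL) sequence of relations, for a vertex type `V` with
neighbor sets `N` and features `X`: `r 0 u v ↔ X u = X v`, and `r (t+1) u v` iff
`r t u v` and for every `w`, `u` and `v` have equally many neighbors `z` with `r t z w`. -/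
noncomputable def colorRefine {V F : Type*} (N : V → Finset V) (X : V → F) :
    ℕ → V → V → Prop
  | 0 => fun u v => X u = X v
  | t + 1 => fun u v => colorRefine N X t u v ∧
      ∀ w, ((N u).filter fun z => colorRefine N X t z w).card =
           ((N v).filter fun z => colorRefine N X t z w).card


/-- Neighbor sets in the disjoint union of the graphs given by `A` and `B`. -/
noncomputable def sumNbrs {n : ℕ} (A B : Matrix (Fin n) (Fin n) ℝ) :
    Fin n ⊕ Fin n → Finset (Fin n ⊕ Fin n)
  | Sum.inl i => (nbrs A i).image Sum.inl
  | Sum.inr j => (nbrs B j).image Sum.inr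

open Classical in
/-- Two featured graphs are 1-WL equivalent if every class of the stable color
refinement relation `r (2n)` on their disjoint union contains exactly as many
left-side as right-side vertices. -/
noncomputable def WLEquiv {n d : ℕ} (G H : FeaturedGraph n d) : Prop :=
  ∀ w : Fin n ⊕ Fin n,
    (Finset.univ.filter fun i : Fin n =>
      colorRefine (sumNbrs G.A H.A) (Sum.elim G.X H.X) (2 * n) (Sum.inl i) w).card =
    (Finset.univ.filter fun j : Fin n =>
      colorRefine (sumNbrs G.A H.A) (Sum.elim G.X H.X) (2 * n) (Sum.inr j) w).card

/-- A stable partition of a featured graph: a partition of the vertices into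
nonempty parts such that vertices in the same part have the same feature and the
same number of neighbors in every part. -/
def IsStablePartition {n d k : ℕ} (G : FeaturedGraph n d) (P : Fin k → Finset (Fin n)) : Prop :=
  (∀ t, (P t).Nonempty) ∧ (∀ i : Fin n, ∃! t, i ∈ P t) ∧
    ∀ t, ∀ u ∈ P t, ∀ v ∈ P t, G.X u = G.X v ∧
      ∀ l, (nbrs G.A u ∩ P l).card = (nbrs G.A v ∩ P l).card

/-- The ℓ² operator norm of a square real matrix. -/
noncomputable def l2OpNorm {n : ℕ} (M : Matrix (Fin n) (Fin n) ℝ) : ℝ :=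
  ‖Matrix.toEuclideanCLM (𝕜 := ℝ) M‖

open Finset Matrix

theorem sum_indicator_one_eq_card {ι : Type*} [Fintype ι] (p : ι → Prop) [DecidablePred p] :
    ∑ i, {i | p i}.indicator (1 : ι → ℝ) i = #{i | p i} := by
  simp [Set.indicator_apply, sum_boole]

section DoublyStochastic

variable {ι : Type*} [Fintype ι] [DecidableEq ι] {S : Matrix ι ι ℝ}

theorem mulVec_indicator_of_mem_doublyStochastic (hS : S ∈ doublyStochastic ℝ ι)
    {p q : ι → Prop} (hpq : ∀ i j, S i j ≠ 0 → (p i ↔ q j)) :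
    S *ᵥ {j | q j}.indicator 1 = {i | p i}.indicator 1 := by
  classical
  ext i
  have hterm : ∀ j, S i j * {j | q j}.indicator 1 j = S i j * {i | p i}.indicator 1 i := by
    intro j
    by_cases hij : S i j = 0
    · simp [hij]
    · simp [Set.indicator_apply, hpq i j hij]
  simp only [mulVec, dotProduct, hterm, ← sum_mul, sum_row_of_mem_doublyStochastic hS, one_mul]

theorem indicator_vecMul_of_mem_doublyStochastic (hS : S ∈ doublyStochastic ℝ ι)
    {p q : ι → Prop} (hpq : ∀ i j, S i j ≠ 0 → (p i ↔ q j)) :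
    {i | p i}.indicator 1 ᵥ* S = {j | q j}.indicator 1 := by
  rw [← mulVec_transpose]
  exact mulVec_indicator_of_mem_doublyStochastic (transpose_mem_doublyStochastic_iff.mpr hS)
    fun j i h => (hpq i j h).symm

theorem card_filter_eq_of_mem_doublyStochastic (hS : S ∈ doublyStochastic ℝ ι)
    {p q : ι → Prop} [DecidablePred p] [DecidablePred q]
    (hpq : ∀ i j, S i j ≠ 0 → (p i ↔ q j)) : #{i | p i} = #{j | q j} := by
  have := sum_mulVec_of_mem_doublyStochastic (x := {j | q j}.indicator 1) hS
  rw [mulVec_indicator_of_mem_doublyStochastic hS hpq, sum_indicator_one_eq_card,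
    sum_indicator_one_eq_card] at this
  exact_mod_cast this

theorem eq_of_mulVec_eq_of_vecMul_eq (hS : S ∈ doublyStochastic ℝ ι) {a b : ι → ℝ}
    (ha : S *ᵥ b = a) (hb : a ᵥ* S = b) {i j : ι} (hij : S i j ≠ 0) : a i = b j := by
  -- `a ⬝ᵥ S *ᵥ b` equals both `a ⬝ᵥ a` and `b ⬝ᵥ b`, so the `S`-weighted sum of the
  -- squares `(a i - b j) ^ 2` vanishes.
  have hab : a ⬝ᵥ a = a ⬝ᵥ (S *ᵥ b) := by rw [ha]
  have hba : b ⬝ᵥ b = a ⬝ᵥ (S *ᵥ b) := by rw [dotProduct_mulVec, hb]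
  have hrow : ∑ i, ∑ j, S i j * a i ^ 2 = a ⬝ᵥ a := by
    simp only [← sum_mul, sum_row_of_mem_doublyStochastic hS, one_mul, dotProduct, sq]
  have hcol : ∑ i, ∑ j, S i j * b j ^ 2 = b ⬝ᵥ b := by
    rw [sum_comm]
    simp only [← sum_mul, sum_col_of_mem_doublyStochastic hS, one_mul, dotProduct, sq]
  have hzero : ∑ i, ∑ j, S i j * (a i - b j) ^ 2 = 0 := by
    have hexp : ∀ i j, S i j * (a i - b j) ^ 2 =
        S i j * a i ^ 2 - 2 * (a i * (S i j * b j)) + S i j * b j ^ 2 := fun _ _ => by ring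
    simp only [hexp, sum_add_distrib, sum_sub_distrib, ← mul_sum, hrow, hcol]
    change a ⬝ᵥ a - 2 * (a ⬝ᵥ (S *ᵥ b)) + b ⬝ᵥ b = 0
    linarith
  have hterm : ∀ i j, 0 ≤ S i j * (a i - b j) ^ 2 := fun i j =>
    mul_nonneg (nonneg_of_mem_doublyStochastic hS) (sq_nonneg _)
  rw [sum_eq_zero_iff_of_nonneg fun i _ => sum_nonneg fun j _ => hterm i j] at hzero
  have hij' := (sum_eq_zero_iff_of_nonneg fun j _ => hterm i j).mp (hzero i (mem_univ i)) j
    (mem_univ j)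
  exact sub_eq_zero.mp (pow_eq_zero_iff two_ne_zero |>.mp ((mul_eq_zero.mp hij').resolve_left hij))

end DoublyStochastic

theorem Setoid.card_quotient_lt_of_lt {α : Type*} [Fintype α] {s t : Setoid α}
    [DecidableRel s.r] [DecidableRel t.r] (h : s < t) :
    Fintype.card (Quotient t) < Fintype.card (Quotient s) := by
  refine Fintype.card_lt_of_surjective_not_injective (Setoid.map_of_le h.le) ?_ ?_
  · rintro ⟨x⟩
    exact ⟨Quotient.mk s x, rfl⟩
  · intro hinj
    exact h.not_ge fun x y hxy =>
      Quotient.exact (hinj (Quotient.sound hxy : (⟦x⟧ : Quotient t) = ⟦y⟧))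

open Classical in
theorem Setoid.exists_succ_eq_of_antitone {α : Type*} [Fintype α] {r : ℕ → Setoid α}
    (hr : Antitone r) {m : ℕ} (hm : Fintype.card α ≤ m) : ∃ t ≤ m, r (t + 1) = r t := by
  by_contra! hne
  rcases isEmpty_or_nonempty α with hα | hα
  · exact hne 0 m.zero_le (Setoid.ext fun x => hα.elim x)
  have hcard : ∀ t ≤ m + 1, t + 1 ≤ Fintype.card (Quotient (r t)) := by
    intro t
    induction t with
    | zero => exact fun _ => Fintype.card_pos_iff.mpr ⟨Quotient.mk _ hα.some⟩
    | succ t ih =>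
      intro ht
      have := Setoid.card_quotient_lt_of_lt
        ((hr (Nat.le_add_right t 1)).lt_of_ne (hne t (by omega)))
      have := ih (by omega)
      omega
  have := hcard (m + 1) le_rfl
  have := Fintype.card_quotient_le (r (m + 1))
  omega

section ColorRefine

variable {V F : Type*} {N : V → Finset V} {X : V → F}

theorem colorRefine_refl : ∀ (t : ℕ) (u : V), colorRefine N X t u u
  | 0, _ => rfl
  | t + 1, u => ⟨colorRefine_refl t u, fun _ => rfl⟩

theorem colorRefine_symm : ∀ {t : ℕ} {u v : V}, colorRefine N X t u v → colorRefine N X t v u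
  | 0, _, _, h => h.symm
  | _ + 1, _, _, h => ⟨colorRefine_symm h.1, fun w => (h.2 w).symm⟩

theorem colorRefine_trans : ∀ {t : ℕ} {u v w : V},
    colorRefine N X t u v → colorRefine N X t v w → colorRefine N X t u w
  | 0, _, _, _, h, h' => h.trans h'
  | _ + 1, _, _, _, h, h' => ⟨colorRefine_trans h.1 h'.1, fun w => (h.2 w).trans (h'.2 w)⟩

theorem colorRefine_iff_of_left {t : ℕ} {u v : V} (huv : colorRefine N X t u v) (w : V) :
    colorRefine N X t u w ↔ colorRefine N X t v w :=
  ⟨colorRefine_trans (colorRefine_symm huv), colorRefine_trans huv⟩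

theorem colorRefine_iff_of_right {t : ℕ} {u v : V} (huv : colorRefine N X t u v) (w : V) :
    colorRefine N X t w u ↔ colorRefine N X t w v :=
  ⟨(colorRefine_trans · huv), (colorRefine_trans · (colorRefine_symm huv))⟩

def colorRefineSetoid (N : V → Finset V) (X : V → F) (t : ℕ) : Setoid V :=
  ⟨colorRefine N X t, colorRefine_refl t, colorRefine_symm, colorRefine_trans⟩

theorem colorRefine_of_succ {t : ℕ} {u v : V} (h : colorRefine N X (t + 1) u v) :
    colorRefine N X t u v :=
  h.1

theorem colorRefineSetoid_antitone : Antitone (colorRefineSetoid N X) :=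
  antitone_nat_of_succ_le fun _ _ _ => colorRefine_of_succ

theorem colorRefine_of_le {s t : ℕ} (hst : s ≤ t) {u v : V} (h : colorRefine N X t u v) :
    colorRefine N X s u v :=
  colorRefineSetoid_antitone hst h

theorem colorRefine_succ_eq_of_succ_eq {t : ℕ}
    (h : colorRefine N X (t + 1) = colorRefine N X t) :
    colorRefine N X (t + 2) = colorRefine N X (t + 1) := by
  ext u v
  refine ⟨colorRefine_of_succ, fun huv => ⟨huv, fun w => ?_⟩⟩
  rw [h]
  exact huv.2 w

theorem colorRefine_succ_eq_of_card_le [Fintype V] {m : ℕ} (hm : Fintype.card V ≤ m) :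
    colorRefine N X (m + 1) = colorRefine N X m := by
  obtain ⟨t, htm, ht⟩ := Setoid.exists_succ_eq_of_antitone colorRefineSetoid_antitone hm
  replace ht : colorRefine N X (t + 1) = colorRefine N X t := congrArg (⇑) ht
  clear hm
  induction m, htm using Nat.le_induction with
  | base => exact ht
  | succ m _ ih => exact colorRefine_succ_eq_of_succ_eq ih

end ColorRefine

theorem l2OpNorm_eq_zero_iff {n : ℕ} {M : Matrix (Fin n) (Fin n) ℝ} :
    l2OpNorm M = 0 ↔ M = 0 := by
  rw [l2OpNorm, norm_eq_zero, EmbeddingLike.map_eq_zero_iff]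

theorem l2OpNorm_nonneg {n : ℕ} (M : Matrix (Fin n) (Fin n) ℝ) : 0 ≤ l2OpNorm M :=
  norm_nonneg _

theorem l2OpNorm_add_sum_eq_zero_iff {n : ℕ} {E : Type*} [NormedAddCommGroup E]
    {A B S : Matrix (Fin n) (Fin n) ℝ} (hS : ∀ i j, 0 ≤ S i j) (X Y : Fin n → E) :
    l2OpNorm (A * S - S * B) + ∑ i, ∑ j, S i j * ‖X i - Y j‖ = 0 ↔
      A * S = S * B ∧ ∀ i j, S i j ≠ 0 → X i = Y j := by
  have hterm : ∀ i j, 0 ≤ S i j * ‖X i - Y j‖ := fun i j =>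
    mul_nonneg (hS i j) (norm_nonneg _)
  have hrow : ∀ i, 0 ≤ ∑ j, S i j * ‖X i - Y j‖ := fun i =>
    sum_nonneg fun j _ => hterm i j
  rw [add_eq_zero_iff_of_nonneg (l2OpNorm_nonneg _) (sum_nonneg fun i _ => hrow i),
    l2OpNorm_eq_zero_iff, sub_eq_zero, sum_eq_zero_iff_of_nonneg fun i _ => hrow i]
  refine and_congr_right fun _ => forall_congr' fun i => ?_
  simp only [mem_univ, true_imp_iff, sum_eq_zero_iff_of_nonneg fun j _ => hterm i j, mul_eq_zero,
    norm_eq_zero, sub_eq_zero, or_iff_not_imp_left]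

open Classical

theorem mulVec_indicator_eq_card_nbrs {n : ℕ} {A : Matrix (Fin n) (Fin n) ℝ}
    (hA : ∀ i j, A i j = 0 ∨ A i j = 1) (p : Fin n → Prop) (i : Fin n) :
    (A *ᵥ {k | p k}.indicator 1) i = #{k ∈ nbrs A i | p k} := by
  have hterm : ∀ k, A i k * {k | p k}.indicator 1 k = if A i k = 1 ∧ p k then 1 else 0 := by
    intro k
    rcases hA i k with h | h <;> simp [h, Set.indicator_apply]
  simp only [mulVec, dotProduct, hterm, sum_boole, nbrs, filter_filter]

theorem card_filter_sumNbrs_inl {n : ℕ} (A B : Matrix (Fin n) (Fin n) ℝ) (i : Fin n)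
    (p : Fin n ⊕ Fin n → Prop) :
    #{z ∈ sumNbrs A B (.inl i) | p z} = #{k ∈ nbrs A i | p (.inl k)} := by
  rw [sumNbrs, filter_image, card_image_of_injective _ Sum.inl_injective]

theorem card_filter_sumNbrs_inr {n : ℕ} (A B : Matrix (Fin n) (Fin n) ℝ) (j : Fin n)
    (p : Fin n ⊕ Fin n → Prop) :
    #{z ∈ sumNbrs A B (.inr j) | p z} = #{k ∈ nbrs B j | p (.inr k)} := by
  rw [sumNbrs, filter_image, card_image_of_injective _ Sum.inr_injective]

namespace FeaturedGraph

variable {n d : ℕ}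

theorem vecMul_A (G : FeaturedGraph n d) (x : Fin n → ℝ) : x ᵥ* G.A = G.A *ᵥ x := by
  rw [← Matrix.vecMul_transpose, G.isSymm.eq]

abbrev unionRefine (G H : FeaturedGraph n d) :
    ℕ → Fin n ⊕ Fin n → Fin n ⊕ Fin n → Prop :=
  colorRefine (sumNbrs G.A H.A) (Sum.elim G.X H.X)

open Sum

theorem unionRefine_inl_inr_of_ne_zero {G H : FeaturedGraph n d} {S : Matrix (Fin n) (Fin n) ℝ}
    (hS : S ∈ doublyStochastic ℝ (Fin n)) (hAS : G.A * S = S * H.A)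
    (hX : ∀ i j, S i j ≠ 0 → G.X i = H.X j) (t : ℕ) {i j : Fin n} (hij : S i j ≠ 0) :
    unionRefine G H t (inl i) (inr j) := by
  induction t generalizing i j with
  | zero => exact hX i j hij
  | succ t ih =>
    refine ⟨ih hij, fun w => ?_⟩
    set p := fun k => unionRefine G H t (inl k) w
    set q := fun k => unionRefine G H t (inr k) w
    have hpq : ∀ i j, S i j ≠ 0 → (p i ↔ q j) := fun i j h =>
      colorRefine_iff_of_left (ih h) w
    have ha : S *ᵥ (H.A *ᵥ {k | q k}.indicator 1) = G.A *ᵥ {k | p k}.indicator 1 := by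
      rw [mulVec_mulVec, ← hAS, ← mulVec_mulVec,
        mulVec_indicator_of_mem_doublyStochastic hS hpq]
    have hb : (G.A *ᵥ {k | p k}.indicator 1) ᵥ* S = H.A *ᵥ {k | q k}.indicator 1 := by
      rw [← vecMul_A, vecMul_vecMul, hAS, ← vecMul_vecMul,
        indicator_vecMul_of_mem_doublyStochastic hS hpq, vecMul_A]
    have := eq_of_mulVec_eq_of_vecMul_eq hS ha hb hij
    rw [mulVec_indicator_eq_card_nbrs G.zeroOne, mulVec_indicator_eq_card_nbrs H.zeroOne] at this
    rw [card_filter_sumNbrs_inl, card_filter_sumNbrs_inr]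
    exact_mod_cast this

theorem wlEquiv_of_doublyStochastic {G H : FeaturedGraph n d} {S : Matrix (Fin n) (Fin n) ℝ}
    (hS : S ∈ doublyStochastic ℝ (Fin n)) (hAS : G.A * S = S * H.A)
    (hX : ∀ i j, S i j ≠ 0 → G.X i = H.X j) : WLEquiv G H := fun w =>
  card_filter_eq_of_mem_doublyStochastic hS fun _ _ hij =>
    colorRefine_iff_of_left (unionRefine_inl_inr_of_ne_zero hS hAS hX (2 * n) hij) w

section Stable

variable (G H : FeaturedGraph n d)

local notation "r" => unionRefine G H (2 * n)

theorem unionRefine_card_nbrs_eq {u v : Fin n ⊕ Fin n} (huv : r u v) (w : Fin n ⊕ Fin n) :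
    #{z ∈ sumNbrs G.A H.A u | r z w} = #{z ∈ sumNbrs G.A H.A v | r z w} := by
  have hstable := colorRefine_succ_eq_of_card_le (N := sumNbrs G.A H.A) (X := Sum.elim G.X H.X)
    (m := 2 * n) (by simp [two_mul])
  rw [unionRefine, ← hstable] at huv
  exact huv.2 w

theorem indicator_dotProduct_mulVec_indicator (u v : Fin n ⊕ Fin n) :
    {i | r (inl i) u}.indicator 1 ⬝ᵥ (G.A *ᵥ {i | r (inl i) v}.indicator 1) =
      (#{i | r (inl i) u} : ℝ) * #{z ∈ sumNbrs G.A H.A u | r z v} := by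
  have hterm : ∀ i, {i | r (inl i) u}.indicator 1 i * (G.A *ᵥ {i | r (inl i) v}.indicator 1) i =
      if r (inl i) u then (#{z ∈ sumNbrs G.A H.A u | r z v} : ℝ) else 0 := by
    intro i
    rw [mulVec_indicator_eq_card_nbrs G.zeroOne, ← card_filter_sumNbrs_inl G.A H.A i (r · v)]
    by_cases hi : r (inl i) u
    · simp [hi, unionRefine_card_nbrs_eq G H hi]
    · simp [hi]
  simp only [dotProduct, hterm, sum_ite, sum_const_zero, add_zero, sum_const, nsmul_eq_mul]

-- Double counting the edges of `G` between the left parts of the classes of `u` and `v`.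
theorem card_mul_card_nbrs_comm (u v : Fin n ⊕ Fin n) :
    (#{i | r (inl i) u} : ℝ) * #{z ∈ sumNbrs G.A H.A u | r z v} =
      #{i | r (inl i) v} * #{z ∈ sumNbrs G.A H.A v | r z u} := by
  rw [← indicator_dotProduct_mulVec_indicator, ← indicator_dotProduct_mulVec_indicator,
    dotProduct_mulVec, vecMul_A, dotProduct_comm]

theorem card_class_congr {u v : Fin n ⊕ Fin n} (huv : r u v) :
    #{i | r (inl i) u} = #{i | r (inl i) v} := by
  simp only [colorRefine_iff_of_right huv]

theorem card_class_pos (hWL : WLEquiv G H) (w : Fin n ⊕ Fin n) : 0 < #{i | r (inl i) w} := by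
  rcases w with i | j
  · exact card_pos.mpr ⟨i, by simpa using colorRefine_refl _ (inl i)⟩
  · rw [hWL]
    exact card_pos.mpr ⟨j, by simpa using colorRefine_refl _ (inr j)⟩

/-- Column `j` is the uniform distribution on the left vertices of the stable color of `inr j`. -/
noncomputable def wlPlan : Matrix (Fin n) (Fin n) ℝ :=
  Matrix.of fun i j => {k | r (inl k) (inr j)}.indicator 1 i * (#{k | r (inl k) (inr j)} : ℝ)⁻¹

theorem wlPlan_apply_eq (i j : Fin n) :
    wlPlan G H i j =
      {k | r (inr k) (inl i)}.indicator 1 j * (#{k | r (inl k) (inl i)} : ℝ)⁻¹ := by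
  by_cases hij : r (inl i) (inr j)
  · simp [wlPlan, hij, colorRefine_symm hij, card_class_congr G H hij]
  · have hji : ¬r (inr j) (inl i) := fun h => hij (colorRefine_symm h)
    simp [wlPlan, hij, hji]

theorem wlPlan_mem_doublyStochastic (hWL : WLEquiv G H) :
    wlPlan G H ∈ doublyStochastic ℝ (Fin n) := by
  refine mem_doublyStochastic_iff_sum.mpr ⟨fun i j => ?_, fun i => ?_, fun j => ?_⟩
  · exact mul_nonneg (Set.indicator_nonneg (fun _ _ => zero_le_one) _) (by positivity)
  · simp only [wlPlan_apply_eq, ← sum_mul, sum_indicator_one_eq_card, ← hWL (inl i)]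
    exact mul_inv_cancel₀ (by exact_mod_cast (card_class_pos G H hWL (inl i)).ne')
  · simp only [wlPlan, of_apply, ← sum_mul, sum_indicator_one_eq_card]
    exact mul_inv_cancel₀ (by exact_mod_cast (card_class_pos G H hWL (inr j)).ne')

theorem mul_wlPlan (hWL : WLEquiv G H) : G.A * wlPlan G H = wlPlan G H * H.A := by
  ext i j
  have hL : (G.A * wlPlan G H) i j =
      (G.A *ᵥ {k | r (inl k) (inr j)}.indicator 1) i * (#{k | r (inl k) (inr j)} : ℝ)⁻¹ := by
    simp only [mul_apply, wlPlan, of_apply, ← mul_assoc, ← sum_mul]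
    rfl
  have hR : (wlPlan G H * H.A) i j =
      (H.A *ᵥ {k | r (inr k) (inl i)}.indicator 1) j * (#{k | r (inl k) (inl i)} : ℝ)⁻¹ := by
    rw [mul_apply, mulVec, dotProduct, sum_mul]
    refine sum_congr rfl fun k _ => ?_
    rw [wlPlan_apply_eq, H.isSymm.apply]
    ring
  rw [hL, hR, mulVec_indicator_eq_card_nbrs G.zeroOne, mulVec_indicator_eq_card_nbrs H.zeroOne,
    ← card_filter_sumNbrs_inl G.A H.A i (r · (inr j)),
    ← card_filter_sumNbrs_inr G.A H.A j (r · (inl i))]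
  have hcomm := card_mul_card_nbrs_comm G H (inl i) (inr j)
  have hi : (#{k | r (inl k) (inl i)} : ℝ) ≠ 0 := by
    exact_mod_cast (card_class_pos G H hWL (inl i)).ne'
  have hj : (#{k | r (inl k) (inr j)} : ℝ) ≠ 0 := by
    exact_mod_cast (card_class_pos G H hWL (inr j)).ne'
  field_simp
  linarith

theorem features_eq_of_wlPlan_ne_zero {i j : Fin n} (hij : wlPlan G H i j ≠ 0) :
    G.X i = H.X j := by
  by_contra hX
  have hr : ¬r (inl i) (inr j) := fun h => hX (colorRefine_of_le (Nat.zero_le _) h)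
  simp [wlPlan, hr] at hij

end Stable

end FeaturedGraph

/-- The objective of the graph pseudo-metric vanishes at some doubly stochastic
matrix iff the two featured graphs are 1-WL equivalent. -/
theorem graphDist_eq_zero_iff_wlEquiv {n d : ℕ} (G H : FeaturedGraph n d) :
    (∃ S ∈ doublyStochastic ℝ (Fin n),
        l2OpNorm (G.A * S - S * H.A) + ∑ i, ∑ j, S i j * ‖G.X i - H.X j‖ = 0) ↔
      WLEquiv G H := by
  constructor
  · rintro ⟨S, hS, hzero⟩
    obtain ⟨hAS, hX⟩ := (l2OpNorm_add_sum_eq_zero_iff hS.1 G.X H.X).mp hzero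
    exact FeaturedGraph.wlEquiv_of_doublyStochastic hS hAS hX
  · intro hWL
    have hmem := G.wlPlan_mem_doublyStochastic H hWL
    exact ⟨_, hmem, (l2OpNorm_add_sum_eq_zero_iff hmem.1 G.X H.X).mpr
      ⟨G.mul_wlPlan H hWL, fun _ _ => G.features_eq_of_wlPlan_ne_zero H⟩⟩
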